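/- The winding gauge pairing is symmetric: if B₁, B₂ : ℝ³ → ℝ³ are (say, continuous compactly supported) vector fields and A^W(B)(x, z) := (1/2π) ∫_{ℝ²} B(y, z) × (x − y)/|x − y|² dy (where x − y is the horizontal vector embedded in ℝ³), then ∫ A^W(B₁) · B₂ dV = ∫ A^W(B₂) · B₁ dV, where the volume integrals are over ℝ³. -/

import Mathlib

open MeasureTheory Real

def dot3 (a b : ℝ × ℝ × ℝ) : ℝ := a.1 * b.1 + a.2.1 * b.2.1 + a.2.2 * b.2.2

def cross3 (a b : ℝ × ℝ × ℝ) : ℝ × ℝ × ℝ :=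
  (a.2.1 * b.2.2 - a.2.2 * b.2.1, a.2.2 * b.1 - a.1 * b.2.2, a.1 * b.2.1 - a.2.1 * b.1)

def embed (w : ℝ × ℝ) : ℝ × ℝ × ℝ := (w.1, w.2, 0)

def normSq2 (w : ℝ × ℝ) : ℝ := w.1 ^ 2 + w.2 ^ 2

/-- The winding gauge: points of ℝ³ are written as pairs `(x, z)` of a horizontal position
`x : ℝ × ℝ` and a height `z : ℝ`. -/
noncomputable def AW (B : (ℝ × ℝ) × ℝ → ℝ × ℝ × ℝ) (p : (ℝ × ℝ) × ℝ) : ℝ × ℝ × ℝ :=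
  (2 * π)⁻¹ • ∫ y : ℝ × ℝ, (normSq2 (p.1 - y))⁻¹ • cross3 (B (y, p.2)) (embed (p.1 - y))

/-!
After Fubini, each side of the identity is `(2π)⁻¹` times the integral over `((x, z), y)` of
`|x - y|⁻² (B(y, z) × (x - y)) · C(x, z)`. Exchanging `x` and `y` is measure preserving, and the
scalar triple product identity `(a × (y - x)) · b = (b × (x - y)) · a` turns the density for
`(B₁, B₂)` into the one for `(B₂, B₁)`. The only analytic input is that the integral defining
`A^W(B)` converges at every point: it is the convolution, under the cross product, of the
continuous compactly supported slice `B(·, z)` with the kernel `w / |w|²`, which is bounded by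
`|w|⁻¹` and hence locally integrable on `ℝ²`.
-/

noncomputable def crossL : (ℝ × ℝ × ℝ) →L[ℝ] (ℝ × ℝ × ℝ) →L[ℝ] ℝ × ℝ × ℝ :=
  LinearMap.toContinuousLinearMap
    (LinearMap.toContinuousLinearMap.toLinearMap ∘ₗ
      LinearMap.mk₂ ℝ cross3
        (fun _ _ _ => by ext <;> simp only [cross3, Prod.fst_add, Prod.snd_add] <;> ring)
        (fun _ _ _ => by
          ext <;> simp only [cross3, Prod.smul_fst, Prod.smul_snd, smul_eq_mul] <;> ring)
        (fun _ _ _ => by ext <;> simp only [cross3, Prod.fst_add, Prod.snd_add] <;> ring)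
        (fun _ _ _ => by
          ext <;> simp only [cross3, Prod.smul_fst, Prod.smul_snd, smul_eq_mul] <;> ring))

@[simp] lemma crossL_apply (a b : ℝ × ℝ × ℝ) : crossL a b = cross3 a b := rfl

noncomputable def windingKernel (w : ℝ × ℝ) : ℝ × ℝ × ℝ := (normSq2 w)⁻¹ • embed w

-- `‖w‖` is the sup norm of `ℝ × ℝ`.
lemma sq_norm_le_normSq2 (w : ℝ × ℝ) : ‖w‖ ^ 2 ≤ normSq2 w := by
  rw [Prod.norm_def, Real.norm_eq_abs, Real.norm_eq_abs, normSq2]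
  rcases le_total |w.1| |w.2| with h | h
  · rw [max_eq_right h, sq_abs]; nlinarith [sq_nonneg w.1]
  · rw [max_eq_left h, sq_abs]; nlinarith [sq_nonneg w.2]

lemma norm_embed (w : ℝ × ℝ) : ‖embed w‖ = ‖w‖ := by
  simp [embed, Prod.norm_def]

lemma norm_windingKernel_le (w : ℝ × ℝ) : ‖windingKernel w‖ ≤ ‖w‖ ^ (-1 : ℝ) := by
  rcases eq_or_ne w 0 with rfl | hw
  · simp [windingKernel, embed]
  have hpos : 0 < ‖w‖ := norm_pos_iff.mpr hw
  calc ‖windingKernel w‖ = ‖w‖ / normSq2 w := by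
        rw [windingKernel, norm_smul, norm_embed, norm_inv, Real.norm_of_nonneg
          (by unfold normSq2; positivity), inv_mul_eq_div]
    _ ≤ ‖w‖ / ‖w‖ ^ 2 := div_le_div_of_nonneg_left hpos.le (by positivity) (sq_norm_le_normSq2 w)
    _ = ‖w‖ ^ (-1 : ℝ) := by rw [Real.rpow_neg_one]; field_simp

lemma locallyIntegrable_windingKernel : LocallyIntegrable windingKernel := by
  refine locallyIntegrable_of_norm_le_rpow (C := 1) (α := 1) (by simp) (by simp)
    (ae_of_all _ fun w => by simpa using norm_windingKernel_le w) ?_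
  unfold windingKernel normSq2 embed
  fun_prop

lemma HasCompactSupport.comp_prodMkLeft {X Y M : Type*} [TopologicalSpace X] [TopologicalSpace Y]
    [T1Space Y] [Zero M] {f : X × Y → M} (hf : HasCompactSupport f) (y : Y) :
    HasCompactSupport fun x => f (x, y) :=
  hf.comp_isClosedEmbedding ⟨isEmbedding_prodMkLeft y, by
    convert (isClosed_singleton (x := y)).preimage (continuous_snd (X := X) (Y := Y))
    ext p
    exact ⟨fun ⟨x, hx⟩ => hx ▸ rfl, fun h => ⟨_, Prod.ext rfl h.symm⟩⟩⟩

lemma integrable_AW_integrand {B : (ℝ × ℝ) × ℝ → ℝ × ℝ × ℝ} (hc : Continuous B)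
    (hs : HasCompactSupport B) (x : ℝ × ℝ) (z : ℝ) :
    Integrable fun y => (normSq2 (x - y))⁻¹ • cross3 (B (y, z)) (embed (x - y)) := by
  have := (hs.comp_prodMkLeft z).convolutionExists_left crossL (by fun_prop)
    locallyIntegrable_windingKernel x
  simpa [ConvolutionExistsAt, windingKernel] using this

noncomputable def dot3L (c : ℝ × ℝ × ℝ) : (ℝ × ℝ × ℝ) →L[ℝ] ℝ :=
  LinearMap.toContinuousLinearMap
    { toFun := (dot3 · c)
      map_add' := fun _ _ => by simp only [dot3, Prod.fst_add, Prod.snd_add]; ring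
      map_smul' := fun _ _ => by
        simp only [dot3, Prod.smul_fst, Prod.smul_snd, smul_eq_mul, RingHom.id_apply]; ring }

lemma dot3_smul (r : ℝ) (v c : ℝ × ℝ × ℝ) : dot3 (r • v) c = r * dot3 v c :=
  (dot3L c).map_smul r v

lemma dot3_integral {α : Type*} [MeasurableSpace α] {μ : Measure α} {f : α → ℝ × ℝ × ℝ}
    (hf : Integrable f μ) (c : ℝ × ℝ × ℝ) :
    dot3 (∫ a, f a ∂μ) c = ∫ a, dot3 (f a) c ∂μ :=
  ((dot3L c).integral_comp_comm hf).symm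

lemma dot3_AW {B : (ℝ × ℝ) × ℝ → ℝ × ℝ × ℝ} (hc : Continuous B) (hs : HasCompactSupport B)
    (c : ℝ × ℝ × ℝ) (p : (ℝ × ℝ) × ℝ) :
    dot3 (AW B p) c = (2 * π)⁻¹ *
      ∫ y, (normSq2 (p.1 - y))⁻¹ * dot3 (cross3 (B (y, p.2)) (embed (p.1 - y))) c := by
  simp_rw [AW, dot3_smul, dot3_integral (integrable_AW_integrand hc hs p.1 p.2), dot3_smul]

noncomputable def pairingDensity (B C : (ℝ × ℝ) × ℝ → ℝ × ℝ × ℝ)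
    (q : ((ℝ × ℝ) × ℝ) × (ℝ × ℝ)) : ℝ :=
  (normSq2 (q.1.1 - q.2))⁻¹ * dot3 (cross3 (B (q.2, q.1.2)) (embed (q.1.1 - q.2))) (C q.1)

lemma integral_dot3_AW {B C : (ℝ × ℝ) × ℝ → ℝ × ℝ × ℝ} (hc : Continuous B)
    (hs : HasCompactSupport B) (hint : Integrable (pairingDensity B C)) :
    ∫ p, dot3 (AW B p) (C p) = (2 * π)⁻¹ * ∫ q, pairingDensity B C q := by
  simp_rw [dot3_AW hc hs, integral_const_mul]
  exact congrArg _ (integral_integral hint)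

lemma integral_comp_exchange {α β E : Type*} [MeasurableSpace α] [MeasurableSpace β]
    [NormedAddCommGroup E] [NormedSpace ℝ E] (μ : Measure α) (ν : Measure β) [SFinite μ]
    [SFinite ν] (f : (α × β) × α → E) :
    ∫ q, f ((q.2, q.1.2), q.1.1) ∂(μ.prod ν).prod μ = ∫ q, f q ∂(μ.prod ν).prod μ := by
  let e : (α × β) × α ≃ᵐ (α × β) × α := MeasurableEquiv.prodAssoc.trans
    (MeasurableEquiv.prodComm.trans (MeasurableEquiv.prodComm.prodCongr (MeasurableEquiv.refl α)))
  have he : MeasurePreserving e ((μ.prod ν).prod μ) ((μ.prod ν).prod μ) :=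
    ((Measure.measurePreserving_swap.prod (MeasurePreserving.id μ)).comp
      Measure.measurePreserving_swap).comp (measurePreserving_prodAssoc μ ν μ)
  exact he.integral_comp' f

lemma dot3_cross3_embed_sub (a b : ℝ × ℝ × ℝ) (x y : ℝ × ℝ) :
    dot3 (cross3 a (embed (y - x))) b = dot3 (cross3 b (embed (x - y))) a := by
  simp only [dot3, cross3, embed, Prod.fst_sub, Prod.snd_sub]; ring

lemma normSq2_sub_comm (x y : ℝ × ℝ) : normSq2 (x - y) = normSq2 (y - x) := by
  simp only [normSq2, Prod.fst_sub, Prod.snd_sub]; ring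

lemma pairingDensity_exchange (B C : (ℝ × ℝ) × ℝ → ℝ × ℝ × ℝ) (q : ((ℝ × ℝ) × ℝ) × (ℝ × ℝ)) :
    pairingDensity B C ((q.2, q.1.2), q.1.1) = pairingDensity C B q := by
  simp only [pairingDensity, normSq2_sub_comm, dot3_cross3_embed_sub]

/-- The winding gauge pairing is symmetric:
`∫ A^W(B₁) · B₂ dV = ∫ A^W(B₂) · B₁ dV`. -/
theorem winding_gauge_pairing_symmetric
    (B₁ B₂ : (ℝ × ℝ) × ℝ → ℝ × ℝ × ℝ)
    (hB₁c : Continuous B₁) (hB₁s : HasCompactSupport B₁)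
    (hB₂c : Continuous B₂) (hB₂s : HasCompactSupport B₂)
    (hint₁ : Integrable (fun q : ((ℝ × ℝ) × ℝ) × (ℝ × ℝ) =>
      (normSq2 (q.1.1 - q.2))⁻¹ *
        dot3 (cross3 (B₁ (q.2, q.1.2)) (embed (q.1.1 - q.2))) (B₂ q.1)))
    (hint₂ : Integrable (fun q : ((ℝ × ℝ) × ℝ) × (ℝ × ℝ) =>
      (normSq2 (q.1.1 - q.2))⁻¹ *
        dot3 (cross3 (B₂ (q.2, q.1.2)) (embed (q.1.1 - q.2))) (B₁ q.1))) :
    ∫ p : (ℝ × ℝ) × ℝ, dot3 (AW B₁ p) (B₂ p) = ∫ p : (ℝ × ℝ) × ℝ, dot3 (AW B₂ p) (B₁ p) := by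
  rw [integral_dot3_AW hB₁c hB₁s hint₁, integral_dot3_AW hB₂c hB₂s hint₂]
  have h := integral_comp_exchange volume volume (pairingDensity B₁ B₂)
  simp only [pairingDensity_exchange] at h
  exact congrArg _ h.symm
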